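/- arXiv:2409.11335 — 3 statements merged into one kernel-verified Lean document; each statement's English description precedes it below -/
import Mathlib

section
/- Let G be a group and F the free group on {x, y, z}. The subgroup of F generated by the set {x, y} ∪ {zⁱ x z⁻ⁱ : 1 ≤ i ≤ n} is free of rank n + 2 on those generators. -/
/-!
Let `A` be the generators other than `z`. Sending `z` to the generator of `ℤ` and each `a ∈ A`
to the free generator `(a, 0)` defines a homomorphism `F → F(A × ℤ) ⋊ ℤ`, where `ℤ` acts by
shifting the second coordinate. It sends `zᵏ a z⁻ᵏ` to `(a, k)`, so the conjugates `zᵏ a z⁻ᵏ`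
(`a ∈ A`, `k ∈ ℤ`) form a free family. The listed elements are
the members of this family indexed by `(x, 0), (y, 0), (x, 1), …, (x, n)`.
-/

open FreeGroup SemidirectProduct

namespace FreeGroup

lemma lift_comp_map {α β G : Type*} [Group G] (f : β → G) (g : α → β) :
    lift (f ∘ g) = (lift f).comp (map g) :=
  ext_hom _ _ fun _ => by simp

variable {ι : Type*}

def shiftAut : Multiplicative ℤ →* MulAut (FreeGroup (ι × ℤ)) where
  toFun k := freeGroupCongr ((Equiv.refl ι).prodCongr (Equiv.addLeft k.toAdd))
  map_one' := by
    apply MulEquiv.toMonoidHom_injective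
    ext
    simp [freeGroupCongr]
  map_mul' k l := by
    apply MulEquiv.toMonoidHom_injective
    ext ⟨i, m⟩
    simp [freeGroupCongr, add_assoc]

@[simp]
lemma shiftAut_of (k : Multiplicative ℤ) (i : ι) (m : ℤ) :
    shiftAut k (of (i, m)) = of (i, k.toAdd + m) :=
  rfl

variable {α : Type*} (c : α)

def conjPow (p : {a // a ≠ c} × ℤ) : FreeGroup α :=
  of c ^ p.2 * of p.1.1 * (of c ^ p.2)⁻¹

variable [DecidableEq α]

def unwind : FreeGroup α →* FreeGroup ({a // a ≠ c} × ℤ) ⋊[shiftAut] Multiplicative ℤ :=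
  lift fun a => if h : a = c then inr (.ofAdd 1) else inl (of (⟨a, h⟩, 0))

lemma unwind_of_ne {a : α} (ha : a ≠ c) : unwind c (of a) = inl (of (⟨a, ha⟩, 0)) := by
  simp [unwind, ha]

lemma unwind_of_pow (k : ℤ) : unwind c (of c ^ k) = inr (.ofAdd k) := by
  rw [map_zpow, unwind, lift_apply_of, dif_pos rfl, ← map_zpow, ← ofAdd_zsmul, zsmul_one,
    Int.cast_id]

lemma unwind_comp_lift_conjPow : (unwind c).comp (lift (conjPow c)) = inl := by
  refine ext_hom _ _ fun ⟨⟨a, ha⟩, k⟩ => ?_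
  rw [MonoidHom.comp_apply, lift_apply_of, conjPow, _root_.map_mul, _root_.map_mul,
    _root_.map_inv, unwind_of_pow, unwind_of_ne c ha, ← _root_.map_inv, ← inl_aut, shiftAut_of, toAdd_ofAdd, add_zero]

theorem injective_lift_conjPow : Function.Injective (lift (conjPow c)) :=
  .of_comp (f := unwind c) <| by
    rw [← MonoidHom.coe_comp, unwind_comp_lift_conjPow]
    exact inl_injective

end FreeGroup

/-- In the free group F on {x, y, z} (here `FreeGroup (Fin 3)` with
x = of 0, y = of 1, z = of 2), the elements x, y, z x z⁻¹, z² x z⁻², …, zⁿ x z⁻ⁿ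
freely generate a free subgroup of rank n + 2: the homomorphism from the free
group of rank n + 2 sending the i-th basis element to the i-th listed element is
injective, and its range is the subgroup generated by those elements. -/
theorem free_subgroup_of_conjugates (n : ℕ) :
    let x : FreeGroup (Fin 3) := FreeGroup.of 0
    let y : FreeGroup (Fin 3) := FreeGroup.of 1
    let z : FreeGroup (Fin 3) := FreeGroup.of 2
    let f : Fin (n + 2) → FreeGroup (Fin 3) := fun i =>
      if i.val = 0 then x
      else if i.val = 1 then y
      else z ^ (i.val - 1) * x * (z ^ (i.val - 1))⁻¹
    Function.Injective (FreeGroup.lift f) ∧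
      (FreeGroup.lift f).range = Subgroup.closure (Set.range f) := by
  intro x y z f
  refine ⟨?_, range_lift_eq_closure⟩
  -- truncated subtraction sends index `0` to `(x, 0)`
  let g : Fin (n + 2) → {a : Fin 3 // a ≠ 2} × ℤ := fun i =>
    (if i.val = 1 then ⟨1, by decide⟩ else ⟨0, by decide⟩, (i.val - 1 : ℕ))
  have hg : Function.Injective g := by
    intro i j hij
    simp only [g, Prod.ext_iff, Nat.cast_inj] at hij
    ext
    split_ifs at hij <;> simp_all; omega
  have hf : f = conjPow 2 ∘ g := by
    funext i
    simp only [f, g, x, y, z, conjPow, Function.comp_apply, zpow_natCast]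
    split_ifs <;> simp_all
  rw [hf, lift_comp_map]
  exact (injective_lift_conjPow 2).comp (map_injective hg)
end

section
/- In the right-angled Artin group A(P₄) = ⟨a, b, c, d | ab=ba, bc=cb, cd=dc⟩, the elements aca⁻¹ and c generate a free subgroup of rank 2. -/
/-- Relations of the right-angled Artin group A(P₄) = ⟨a,b,c,d | ab=ba, bc=cb, cd=dc⟩,
generators indexed by `Fin 4` (0 ↦ a, 1 ↦ b, 2 ↦ c, 3 ↦ d). -/
def AP4Rels : Set (FreeGroup (Fin 4)) :=
  { FreeGroup.of 0 * FreeGroup.of 1 * (FreeGroup.of 1 * FreeGroup.of 0)⁻¹,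
    FreeGroup.of 1 * FreeGroup.of 2 * (FreeGroup.of 2 * FreeGroup.of 1)⁻¹,
    FreeGroup.of 2 * FreeGroup.of 3 * (FreeGroup.of 3 * FreeGroup.of 2)⁻¹ }

/-- The action of `Equiv.Perm Bool` on `FreeGroup Bool` by permuting generators. -/
def swapAut : Equiv.Perm Bool →* MulAut (FreeGroup Bool) where
  toFun p := FreeGroup.freeGroupCongr p
  map_one' := FreeGroup.freeGroupCongr_refl
  map_mul' p q := ((FreeGroup.freeGroupCongr_trans q p).symm : _)

/-- Target group: semidirect product `FreeGroup Bool ⋊ Perm Bool`. -/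
abbrev TG := SemidirectProduct (FreeGroup Bool) (Equiv.Perm Bool) swapAut

def tf : Fin 4 → TG := fun i =>
  if i = 0 then SemidirectProduct.inr (Equiv.swap true false)
  else if i = 2 then SemidirectProduct.inl (FreeGroup.of false)
  else 1

lemma tf_rels : ∀ r ∈ AP4Rels, FreeGroup.lift tf r = 1 := by
  intro r hr
  simp only [AP4Rels, Set.mem_insert_iff, Set.mem_singleton_iff] at hr
  rcases hr with h | h | h <;> subst h <;>
    simp [tf, show (1:Fin 4) ≠ 0 by decide, show (1:Fin 4) ≠ 2 by decide,
      show (3:Fin 4) ≠ 0 by decide, show (3:Fin 4) ≠ 2 by decide]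

def Φ : PresentedGroup AP4Rels →* TG := PresentedGroup.toGroup tf_rels

/-- In A(P₄), the elements a c a⁻¹ and c generate a free subgroup of rank 2:
the homomorphism from the free group on two generators sending them to
a c a⁻¹ and c is injective. -/
theorem AP4_free_subgroup_rank_two :
    let a : PresentedGroup AP4Rels := PresentedGroup.of 0
    let c : PresentedGroup AP4Rels := PresentedGroup.of 2
    Function.Injective
      (FreeGroup.lift (fun b : Bool => if b then a * c * a⁻¹ else c)) := by
  intro a c
  have key : Φ.comp (FreeGroup.lift (fun b : Bool => if b then a * c * a⁻¹ else c))
      = SemidirectProduct.inl := by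
    apply FreeGroup.ext_hom
    intro b
    cases b
    · simp [Φ, a, c, PresentedGroup.toGroup.of, tf, SemidirectProduct.left_inl, SemidirectProduct.right_inl]
    · simp only [MonoidHom.comp_apply, FreeGroup.lift_apply_of, if_pos, map_mul, map_inv,
        Φ, a, c, PresentedGroup.toGroup.of, tf]
      
      rw [if_neg (by decide)]
      rw [← map_inv SemidirectProduct.inr, ← SemidirectProduct.inl_aut]
      simp only [swapAut, MonoidHom.coe_mk, OneHom.coe_mk, MulAut.smul_def]
      norm_num [FreeGroup.freeGroupCongr, Equiv.swap_apply_right]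
      congr 1
  have : Function.Injective (Φ.comp (FreeGroup.lift (fun b : Bool => if b then a * c * a⁻¹ else c))) := by
    rw [key]; exact SemidirectProduct.inl_injective
  exact Function.Injective.of_comp this
end

section
/- In the right-angled Artin group A(P₄) = ⟨a, b, c, d | ab=ba, bc=cb, cd=dc⟩, the subgroup generated by aca⁻¹, b, c, dbd⁻¹ is isomorphic to A(P₄) itself, with the isomorphism sending the standard generators a, b, c, d to aca⁻¹, b, c, dbd⁻¹ respectively. -/
/-!
A(P₄) is the amalgam of `⟨a, b, c⟩ ≅ F(a, c) × ⟨b⟩` and `⟨b, c, d⟩ ≅ F(d, b) × ⟨c⟩` over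
`⟨b, c⟩ ≅ ℤ²`. On each factor the map acts as `x ↦ x y x⁻¹, y ↦ y` on the free group `F(x, y)`
(with `(x, y) = (a, c)`, resp. `(d, b)`) and as the identity on the central `ℤ`. That free-group
endomorphism is injective by ping-pong. Being injective and the identity on `ℤ²`, the factor maps
send letters outside `ℤ²` to letters outside `ℤ²`, so they carry reduced words of the amalgam to
reduced words; the induced endomorphism of the amalgam is therefore injective.
-/

open Monoid Function CoprodI

namespace Monoid.CoprodI

variable {ι : Type*} {M N : ι → Type*} [∀ i, Monoid (M i)] [∀ i, Monoid (N i)]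

theorem commute_lift {P : Type*} [Monoid P] {f : ∀ i, M i →* P} {x : P}
    (h : ∀ i (m : M i), Commute (f i m) x) (w : CoprodI M) : Commute (lift f w) x := by
  induction w using CoprodI.induction_on with
  | one => simp
  | of i m => simpa using h i m
  | mul v w hv hw => simpa using hv.mul_left hw

namespace Word

theorem fstIdx_of_smul [DecidableEq ι] [∀ i, DecidableEq (M i)] {i : ι} {m : M i} (hm : m ≠ 1)
    {w : Word M} (hw : w.fstIdx ≠ some i) : (of m • w).fstIdx = some i := by
  rw [← cons_eq_smul (h1 := hw) (h2 := hm), fstIdx_cons]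

def map (f : ∀ i, M i →* N i) (hf : ∀ i, Injective (f i)) (w : Word M) : Word N where
  toList := w.toList.map fun l => ⟨l.1, f l.1 l.2⟩
  ne_one := by
    simp only [List.mem_map]
    rintro _ ⟨l, hl, rfl⟩
    exact (map_ne_one_iff _ (hf l.1)).2 (w.ne_one l hl)
  chain_ne := List.isChain_map _ |>.2 w.chain_ne

theorem prod_map (f : ∀ i, M i →* N i) (hf : ∀ i, Injective (f i)) (w : Word M) :
    (w.map f hf).prod = lift (fun i => of.comp (f i)) w.prod := by
  simp [map, prod, map_list_prod, Function.comp_def]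

@[simp]
theorem map_eq_empty_iff {f : ∀ i, M i →* N i} {hf : ∀ i, Injective (f i)} {w : Word M} :
    w.map f hf = empty ↔ w = empty := by
  simp [Word.ext_iff, map, empty]

end Word

end Monoid.CoprodI

namespace Monoid.PushoutI

variable {ι : Type*} {G : ι → Type*} {H : Type*} [∀ i, Group (G i)] [Group H]
  {φ : ∀ i, H →* G i}

theorem NormalWord.Transversal.eq_one_of_mem_set_of_mem_range (d : NormalWord.Transversal φ)
    {i : ι} {g : G i}
    (hg : g ∈ d.set i) (hφg : g ∈ (φ i).range) : g = 1 := by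
  have h₁ := (d.compl i).equiv_fst_eq_self_of_mem_of_one_mem (d.one_mem i) hφg
  have h₂ := (d.compl i).equiv_fst_eq_one_of_mem_of_one_mem (φ i).range.one_mem hg
  simpa using congrArg Subtype.val (h₁.symm.trans h₂)

theorem exists_reduced_word (hφ : ∀ i, Injective (φ i)) (x : PushoutI φ) :
    ∃ (h : H) (w : Word G), Reduced φ w ∧ base φ h * ofCoprodI w.prod = x := by
  classical
  obtain ⟨d⟩ := NormalWord.transversal_nonempty φ hφ
  let n := NormalWord.equiv (d := d) x
  refine ⟨n.head, n.toWord, fun l hl hφl => n.ne_one l hl ?_, NormalWord.equiv.symm_apply_apply x⟩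
  exact d.eq_one_of_mem_set_of_mem_range (n.normalized l.1 l.2 hl) hφl

noncomputable def mapFactors (E : ∀ i, G i →* G i) (hE : ∀ i, (E i).comp (φ i) = φ i) :
    PushoutI φ →* PushoutI φ :=
  lift (fun i => (of i).comp (E i)) (base φ) fun i => by
    rw [MonoidHom.comp_assoc, hE, of_comp_eq_base]

variable {E : ∀ i, G i →* G i} {hE : ∀ i, (E i).comp (φ i) = φ i}

@[simp]
theorem mapFactors_of (i : ι) (g : G i) : mapFactors E hE (of i g) = of i (E i g) :=
  lift_of _ _ _ g

@[simp]
theorem mapFactors_base (h : H) : mapFactors E hE (base φ h) = base φ h :=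
  lift_base _ _ _ h

theorem mapFactors_injective (hφ : ∀ i, Injective (φ i)) (hEinj : ∀ i, Injective (E i)) :
    Injective (mapFactors E hE) := by
  rw [injective_iff_map_eq_one]
  intro x hx
  obtain ⟨h, w, hw, rfl⟩ := exists_reduced_word hφ x
  have hmap : mapFactors E hE (ofCoprodI w.prod) = ofCoprodI (w.map E hEinj).prod := by
    rw [Word.prod_map, ← MonoidHom.comp_apply, ← MonoidHom.comp_apply (ofCoprodI)]
    congr 1
    ext i g
    simp [ofCoprodI_of]
  have hred : Reduced φ (w.map E hEinj) := by
    simp only [Reduced, Word.map, List.mem_map]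
    rintro _ ⟨l, hl, rfl⟩ ⟨y, hy⟩
    refine hw l hl ⟨y, hEinj l.1 ?_⟩
    change E l.1 (φ l.1 y) = E l.1 l.2
    rwa [← MonoidHom.comp_apply, hE]
  rw [map_mul, mapFactors_base, hmap] at hx
  have hbase : ofCoprodI (w.map E hEinj).prod ∈ (base φ).range :=
    ⟨h⁻¹, by rw [map_inv, inv_eq_of_mul_eq_one_right hx]⟩
  have hempty := hred.eq_empty_of_mem_range hφ hbase
  obtain rfl := Word.map_eq_empty_iff.1 hempty
  rw [hempty, Word.prod_empty, map_one, mul_one] at hx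
  rw [Word.prod_empty, map_one, mul_one, base_injective hφ (hx.trans (map_one _).symm), map_one]

end Monoid.PushoutI

namespace AP4

abbrev FreeRankTwo : Type := CoprodI fun _ : Bool => Multiplicative ℤ

abbrev letter (i : Bool) : Multiplicative ℤ →* FreeRankTwo :=
  CoprodI.of (M := fun _ : Bool => Multiplicative ℤ) (i := i)

def gen (i : Bool) : FreeRankTwo := letter i (.ofAdd 1)

noncomputable def twist : FreeRankTwo →* FreeRankTwo :=
  CoprodI.lift fun i =>
    cond i (letter true) ((MulAut.conj (gen false)).toMonoidHom.comp (letter true))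

theorem twist_letter_true (n : Multiplicative ℤ) : twist (letter true n) = letter true n := by
  simp [twist]

theorem twist_gen_false : twist (gen false) = gen false * gen true * (gen false)⁻¹ := by
  simp [twist, gen]

theorem twist_injective : Injective twist := by
  classical
  let X : Bool → Set (CoprodI.Word fun _ : Bool => Multiplicative ℤ) :=
    fun i => {w | w.fstIdx = some i}
  refine CoprodI.lift_injective_of_ping_pong _ (Or.inr ⟨true, by simp⟩) X ?_ ?_ ?_
  · intro i
    exact ⟨letter i (.ofAdd 1) • .empty, Word.fstIdx_of_smul (by decide) (by simp [Word.fstIdx])⟩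
  · intro i j hij
    exact Set.disjoint_left.2 fun w hi hj => hij (Option.some.inj (hi.symm.trans hj))
  rintro (_ | _) (_ | _) hij n hn _ ⟨w, hw, rfl⟩
  · exact absurd rfl hij
  · replace hw : w.fstIdx = some true := hw
    have hinv : (gen false)⁻¹ = letter false (.ofAdd (-1)) := by
      rw [gen, ← map_inv]
      rfl
    have h₁ : ((gen false)⁻¹ • w).fstIdx = some false := by
      rw [hinv]
      exact Word.fstIdx_of_smul (by decide) (by simp [hw])
    have h₂ : (letter true n • (gen false)⁻¹ • w).fstIdx = some true :=
      Word.fstIdx_of_smul hn (by simp [h₁])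
    change (letter false (.ofAdd 1) * letter true n * (gen false)⁻¹) • w ∈ X false
    rw [mul_smul, mul_smul]
    exact Word.fstIdx_of_smul (by decide) (by simp [h₂])
  · replace hw : w.fstIdx = some false := hw
    exact Word.fstIdx_of_smul hn (by simp [hw])
  · exact absurd rfl hij

abbrev Vertex : Type := FreeRankTwo × Multiplicative ℤ

abbrev Edge : Type := Multiplicative ℤ × Multiplicative ℤ

/-- `(x, y) : Edge` stands for `b ^ x * c ^ y`. In factor `false`, `F(a, c) × ⟨b⟩`, the letter `c`
is `gen true`; in factor `true`, `F(d, b) × ⟨c⟩`, the letter `b` is `gen true`. -/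
def edgeInclusion : Bool → Edge →* Vertex
  | false => ((letter true).comp (MonoidHom.snd _ _)).prod (MonoidHom.fst _ _)
  | true => ((letter true).comp (MonoidHom.fst _ _)).prod (MonoidHom.snd _ _)

theorem edgeInclusion_injective (i : Bool) : Injective (edgeInclusion i) := by
  have hletter : Injective (letter true) := CoprodI.of_injective true
  cases i <;> rintro ⟨x, y⟩ ⟨x', y'⟩ h <;>
    simp only [edgeInclusion, MonoidHom.prod_apply, MonoidHom.comp_apply, MonoidHom.coe_fst,
      MonoidHom.coe_snd, Prod.mk.injEq, hletter.eq_iff] at h <;>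
    simp [h]

abbrev Amalgam : Type := PushoutI edgeInclusion

noncomputable def vertexTwist : Vertex →* Vertex := twist.prodMap (MonoidHom.id _)

theorem vertexTwist_injective : Injective vertexTwist :=
  twist_injective.prodMap injective_id

theorem vertexTwist_comp_edgeInclusion (i : Bool) :
    vertexTwist.comp (edgeInclusion i) = edgeInclusion i := by
  ext ⟨x, y⟩ <;> cases i <;> simp [vertexTwist, edgeInclusion, twist_letter_true]

noncomputable def amalgamTwist : Amalgam →* Amalgam :=
  PushoutI.mapFactors (fun _ => vertexTwist) vertexTwist_comp_edgeInclusion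

theorem amalgamTwist_injective : Injective amalgamTwist :=
  PushoutI.mapFactors_injective edgeInclusion_injective fun _ => vertexTwist_injective

abbrev RAAG : Type := PresentedGroup AP4Rels

theorem commute_of (i : Fin 3) :
    Commute (PresentedGroup.of i.castSucc : RAAG) (PresentedGroup.of i.succ) := by
  have hrel : FreeGroup.of i.castSucc * FreeGroup.of i.succ *
      (FreeGroup.of i.succ * FreeGroup.of i.castSucc)⁻¹ ∈ AP4Rels := by
    fin_cases i <;> simp [AP4Rels]
  have h := PresentedGroup.one_of_mem hrel
  rwa [map_mul, map_inv, map_mul, map_mul, mul_inv_eq_one] at h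

section Lift

variable {K : Type*} [Group K]

def liftOfCommute (v : Fin 4 → K) (hv : ∀ i : Fin 3, Commute (v i.castSucc) (v i.succ)) :
    RAAG →* K :=
  PresentedGroup.toGroup (f := v) <| by
    simp only [AP4Rels, Set.mem_insert_iff, Set.mem_singleton_iff]
    rintro r (rfl | rfl | rfl) <;>
      simp only [map_mul, map_inv, FreeGroup.lift_apply_of, mul_inv_eq_one]
    exacts [hv 0, hv 1, hv 2]

@[simp]
theorem liftOfCommute_of (v : Fin 4 → K) (hv : ∀ i : Fin 3, Commute (v i.castSucc) (v i.succ))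
    (i : Fin 4) : liftOfCommute v hv (.of i) = v i :=
  PresentedGroup.toGroup.of _

def vertexLift (x y z : K) (hx : Commute x z) (hy : Commute y z) : Vertex →* K :=
  (CoprodI.lift fun i => zpowersHom K (cond i y x)).noncommCoprod (zpowersHom K z) fun w _ =>
    CoprodI.commute_lift (fun i _ => by cases i <;> simp [hx.zpow_zpow, hy.zpow_zpow]) w

@[simp]
theorem vertexLift_apply (x y z : K) (hx : Commute x z) (hy : Commute y z) (v : Vertex) :
    vertexLift x y z hx hy v =
      CoprodI.lift (fun i => zpowersHom K (cond i y x)) v.1 * z ^ v.2.toAdd :=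
  rfl

def edgeLift (y z : K) (h : Commute y z) : Edge →* K :=
  (zpowersHom K y).noncommCoprod (zpowersHom K z) fun _ _ => h.zpow_zpow _ _

@[simp]
theorem edgeLift_apply (y z : K) (h : Commute y z) (e : Edge) :
    edgeLift y z h e = y ^ e.1.toAdd * z ^ e.2.toAdd :=
  rfl

end Lift

noncomputable def amalgamGen : Fin 4 → Amalgam :=
  ![PushoutI.of false (gen false, 1), PushoutI.base _ (.ofAdd 1, 1),
    PushoutI.base _ (1, .ofAdd 1), PushoutI.of true (gen false, 1)]

theorem commute_amalgamGen (i : Fin 3) :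
    Commute (amalgamGen i.castSucc) (amalgamGen i.succ) := by
  fin_cases i
  · change Commute (PushoutI.of false _) (PushoutI.base _ _)
    rw [← PushoutI.of_apply_eq_base _ false]
    exact Commute.map (Commute.prod (by simp [edgeInclusion]) (by simp)) _
  · exact (Commute.all _ _).map _
  · change Commute (PushoutI.base _ _) (PushoutI.of true _)
    rw [← PushoutI.of_apply_eq_base _ true]
    exact Commute.map (Commute.prod (by simp [edgeInclusion]) (by simp)) _

noncomputable def toAmalgam : RAAG →* Amalgam := liftOfCommute amalgamGen commute_amalgamGen

noncomputable def ofAmalgam : Amalgam →* RAAG :=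
  PushoutI.lift
    (fun i => cond i (vertexLift (.of 3) (.of 1) (.of 2) (commute_of 2).symm (commute_of 1))
      (vertexLift (.of 0) (.of 2) (.of 1) (commute_of 0) (commute_of 1).symm))
    (edgeLift (.of 1) (.of 2) (commute_of 1))
    (by
      rintro (_ | _) <;> ext <;> simp [edgeInclusion]
      exact ((commute_of 1).zpow_zpow _ _).eq.symm)

theorem ofAmalgam_comp_toAmalgam : ofAmalgam.comp toAmalgam = MonoidHom.id RAAG := by
  refine PresentedGroup.ext fun i => ?_
  fin_cases i <;> simp [toAmalgam, ofAmalgam, amalgamGen, gen]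

theorem toAmalgam_injective : Injective toAmalgam :=
  LeftInverse.injective (g := ofAmalgam) (DFunLike.congr_fun ofAmalgam_comp_toAmalgam)

def embeddingGen : Fin 4 → RAAG :=
  ![.of 0 * .of 2 * (.of 0)⁻¹, .of 1, .of 2, .of 3 * .of 1 * (.of 3)⁻¹]

theorem commute_embeddingGen (i : Fin 3) :
    Commute (embeddingGen i.castSucc) (embeddingGen i.succ) := by
  have hab : Commute (.of 0 : RAAG) (.of 1) := commute_of 0
  have hbc : Commute (.of 1 : RAAG) (.of 2) := commute_of 1
  have hcd : Commute (.of 2 : RAAG) (.of 3) := commute_of 2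
  fin_cases i
  · exact (hab.mul_left hbc.symm).mul_left hab.inv_left
  · exact hbc
  · exact (hcd.mul_right hbc.symm).mul_right hcd.inv_right

noncomputable def selfEmbedding : RAAG →* RAAG :=
  liftOfCommute embeddingGen commute_embeddingGen

theorem toAmalgam_comp_selfEmbedding :
    toAmalgam.comp selfEmbedding = amalgamTwist.comp toAmalgam := by
  refine PresentedGroup.ext (G := Amalgam) fun i => ?_
  fin_cases i
  all_goals simp [selfEmbedding, embeddingGen, toAmalgam, amalgamGen, amalgamTwist, vertexTwist,
    twist_gen_false]
  · rw [← PushoutI.of_apply_eq_base _ false, ← map_inv, ← map_mul, ← map_mul]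
    simp [edgeInclusion, gen]
  · rw [← PushoutI.of_apply_eq_base _ true, ← map_inv, ← map_mul, ← map_mul]
    simp [edgeInclusion, gen]

theorem selfEmbedding_injective : Injective selfEmbedding := by
  refine Injective.of_comp (f := toAmalgam) ?_
  rw [← MonoidHom.coe_comp, toAmalgam_comp_selfEmbedding, MonoidHom.coe_comp]
  exact amalgamTwist_injective.comp toAmalgam_injective

end AP4

/-- The subgroup of A(P₄) generated by a c a⁻¹, b, c, d b d⁻¹ is isomorphic to A(P₄):
there is an (injective) homomorphism A(P₄) → A(P₄) sending the standard generators
a, b, c, d to a c a⁻¹, b, c, d b d⁻¹ respectively. -/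
theorem AP4_self_embedding :
    let a : PresentedGroup AP4Rels := PresentedGroup.of 0
    let b : PresentedGroup AP4Rels := PresentedGroup.of 1
    let c : PresentedGroup AP4Rels := PresentedGroup.of 2
    let d : PresentedGroup AP4Rels := PresentedGroup.of 3
    ∃ φ : PresentedGroup AP4Rels →* PresentedGroup AP4Rels,
      φ a = a * c * a⁻¹ ∧ φ b = b ∧ φ c = c ∧ φ d = d * b * d⁻¹ ∧
      Function.Injective φ := by
  intro a b c d
  exact ⟨AP4.selfEmbedding, AP4.liftOfCommute_of _ _ 0, AP4.liftOfCommute_of _ _ 1,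
    AP4.liftOfCommute_of _ _ 2, AP4.liftOfCommute_of _ _ 3, AP4.selfEmbedding_injective⟩
end
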